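/- Let (H, s_H, t_H) be an R^e-ring (with commuting source s_H: R → H and target t_H: R^op → H) and (A, s_A) an R-ring. Then the Takeuchi product H ×_R A := { Σ_i h^i ⊗_R a^i ∈ H ⊗_R A : Σ_i h^i t_H(r) ⊗_R a^i = Σ_i h^i ⊗_R a^i s_A(r) for all r ∈ R } is a subalgebra of the (generally non-associative) product structure: it is closed under the factorwise multiplication (Σ h^i ⊗_R a^i)(Σ h̃^j ⊗_R ã^j) = Σ h^i h̃^j ⊗_R a^i ã^j, contains 1_H ⊗_R 1_A, and this makes H ×_R A an associative unital k-algebra. -/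

import Mathlib

open TensorProduct LinearMap MulOpposite

noncomputable section
namespace DKT

variable (k : Type*) [CommRing k] (R H A : Type*) [Ring R] [Ring H] [Ring A]
  [Algebra k R] [Algebra k H] [Algebra k A]
  (sH : R →ₐ[k] H) (tH : Rᵐᵒᵖ →ₐ[k] H) (sA : R →ₐ[k] A)

/-- The balancing relations defining `H ⊗_R A`, where the right `R`-action on `H` is
`h · r = t_H(r) h` (from the bimodule structure `r · h · r' = s_H(r) t_H(r') h`) and the
left `R`-action on `A` is `r · a = s_A(r) a`. -/
def rel : Submodule k (H ⊗[k] A) :=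
  Submodule.span k {x | ∃ (r : R) (h : H) (a : A),
    x = (tH (op r) * h) ⊗ₜ[k] a - h ⊗ₜ[k] (sA r * a)}

/-- `H ⊗_R A` as a quotient of `H ⊗_k A`. -/
abbrev Q := (H ⊗[k] A) ⧸ rel k R H A tH sA

/-- The canonical projection `H ⊗_k A → H ⊗_R A`. -/
abbrev mkq : H ⊗[k] A →ₗ[k] Q k R H A tH sA := (rel k R H A tH sA).mkQ

/-- The Takeuchi condition submodule `H ×_R A ⊆ H ⊗_R A`:
`Σ hⁱ t_H(r) ⊗_R aⁱ = Σ hⁱ ⊗_R aⁱ s_A(r)` for all `r ∈ R`. -/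
def takeuchi : Submodule k (Q k R H A tH sA) :=
  Submodule.map (mkq k R H A tH sA)
    (⨅ r : R, LinearMap.ker
      ((mkq k R H A tH sA) ∘ₗ
        (LinearMap.rTensor A (LinearMap.mulRight k (tH (op r))) -
          LinearMap.lTensor H (LinearMap.mulRight k (sA r)))))

end DKT
end

/-!
Write `b_r := t_H(r) ⊗ 1 - 1 ⊗ s_A(r)` in `H ⊗_k A`. The balancing relations are exactly the
products `b_r · (h ⊗ a)`, so the kernel `I` of `H ⊗_k A → H ⊗_R A` is the right ideal generated
by the `b_r`, while the preimage `T` of `H ×_R A` consists of the `m` with `m · b_r ∈ I` for all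
`r`. Hence `T · I ⊆ I`, which makes `T` a subalgebra and `I ∩ T` a two-sided ideal of it; the
factorwise product on `H ×_R A = T / I` is then well defined, and the algebra laws descend from
`H ⊗_k A` along the surjection `T → H ×_R A`.
-/

namespace TensorProduct

variable {k H A : Type*} [CommRing k] [Ring H] [Ring A] [Algebra k H] [Algebra k A]

theorem rTensor_mulRight_apply (c : H) (m : H ⊗[k] A) :
    rTensor A (mulRight k c) m = m * (c ⊗ₜ 1) := by
  have : rTensor A (mulRight k c) = mulRight k (c ⊗ₜ[k] (1 : A)) :=
    TensorProduct.ext' fun h a => by simp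
  rw [this, mulRight_apply]

theorem lTensor_mulRight_apply (c : A) (m : H ⊗[k] A) :
    lTensor H (mulRight k c) m = m * (1 ⊗ₜ c) := by
  have : lTensor H (mulRight k c) = mulRight k ((1 : H) ⊗ₜ[k] c) :=
    TensorProduct.ext' fun h a => by simp
  rw [this, mulRight_apply]

end TensorProduct

noncomputable section
namespace DKT

variable {k : Type*} [CommRing k] {R H A : Type*} [Ring R] [Ring H] [Ring A]
  [Algebra k R] [Algebra k H] [Algebra k A]
  (tH : Rᵐᵒᵖ →ₐ[k] H) (sA : R →ₐ[k] A)

def balancer (r : R) : H ⊗[k] A := tH (op r) ⊗ₜ 1 - 1 ⊗ₜ sA r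

theorem balancer_mul_tmul (r : R) (h : H) (a : A) :
    balancer tH sA r * (h ⊗ₜ a) = (tH (op r) * h) ⊗ₜ a - h ⊗ₜ (sA r * a) := by
  simp [balancer, sub_mul, Algebra.TensorProduct.tmul_mul_tmul]

theorem balancer_mul_mem_rel (r : R) (x : H ⊗[k] A) :
    balancer tH sA r * x ∈ rel k R H A tH sA := by
  induction x using TensorProduct.induction_on with
  | zero => simp
  | tmul h a => exact Submodule.subset_span ⟨r, h, a, balancer_mul_tmul tH sA r h a⟩
  | add x y hx hy => rw [mul_add]; exact add_mem hx hy

theorem balancer_mem_rel (r : R) : balancer tH sA r ∈ rel k R H A tH sA := by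
  simpa using balancer_mul_mem_rel tH sA r 1

theorem mul_mem_rel {x : H ⊗[k] A} (hx : x ∈ rel k R H A tH sA) (y : H ⊗[k] A) :
    x * y ∈ rel k R H A tH sA := by
  induction hx using Submodule.span_induction with
  | mem x hx =>
    obtain ⟨r, h, a, rfl⟩ := hx
    rw [← balancer_mul_tmul, mul_assoc]
    exact balancer_mul_mem_rel tH sA r _
  | zero => simp
  | add x x' _ _ hx hx' => rw [add_mul]; exact add_mem hx hx'
  | smul c x _ hx => rw [smul_mul_assoc]; exact Submodule.smul_mem _ c hx

abbrev takeuchiPreimage : Submodule k (H ⊗[k] A) :=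
  ⨅ r : R, ker ((mkq k R H A tH sA) ∘ₗ
    (rTensor A (mulRight k (tH (op r))) - lTensor H (mulRight k (sA r))))

theorem mem_takeuchiPreimage {m : H ⊗[k] A} :
    m ∈ takeuchiPreimage tH sA ↔ ∀ r, m * balancer tH sA r ∈ rel k R H A tH sA := by
  simp only [Submodule.mem_iInf, mem_ker, comp_apply, LinearMap.sub_apply, Submodule.mkQ_apply,
    Submodule.Quotient.mk_eq_zero, rTensor_mulRight_apply, lTensor_mulRight_apply, balancer,
    mul_sub]

theorem mul_mem_rel_of_mem_takeuchiPreimage {m x : H ⊗[k] A}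
    (hm : m ∈ takeuchiPreimage tH sA) (hx : x ∈ rel k R H A tH sA) :
    m * x ∈ rel k R H A tH sA := by
  induction hx using Submodule.span_induction with
  | mem x hx =>
    obtain ⟨r, h, a, rfl⟩ := hx
    rw [← balancer_mul_tmul, ← mul_assoc]
    exact mul_mem_rel tH sA (mem_takeuchiPreimage tH sA |>.1 hm r) _
  | zero => simp
  | add x x' _ _ hx hx' => rw [mul_add]; exact add_mem hx hx'
  | smul c x _ hx => rw [mul_smul_comm]; exact Submodule.smul_mem _ c hx

def takeuchiSubalgebra : Subalgebra k (H ⊗[k] A) :=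
  (takeuchiPreimage tH sA).toSubalgebra
    ((mem_takeuchiPreimage tH sA).2 fun r => by simpa using balancer_mem_rel tH sA r)
    fun {m n} hm hn => (mem_takeuchiPreimage tH sA).2 fun r => by
      rw [mul_assoc]
      exact mul_mem_rel_of_mem_takeuchiPreimage tH sA hm
        ((mem_takeuchiPreimage tH sA).1 hn r)

theorem mkq_mul_eq_of_mem_takeuchiPreimage {m₀ m n n' : H ⊗[k] A}
    (hm₀ : m₀ ∈ takeuchiPreimage tH sA)
    (hm : mkq k R H A tH sA m = mkq k R H A tH sA m₀)
    (hn : mkq k R H A tH sA n = mkq k R H A tH sA n') :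
    mkq k R H A tH sA (m * n) = mkq k R H A tH sA (m₀ * n') := by
  rw [Submodule.mkQ_apply, Submodule.mkQ_apply, Submodule.Quotient.eq] at hm hn ⊢
  have hleft : m * n - m₀ * n ∈ rel k R H A tH sA := by
    rw [← sub_mul]; exact mul_mem_rel tH sA hm n
  have hright : m₀ * n - m₀ * n' ∈ rel k R H A tH sA := by
    rw [← mul_sub]; exact mul_mem_rel_of_mem_takeuchiPreimage tH sA hm₀ hn
  simpa using add_mem hleft hright

def toTakeuchi : takeuchiSubalgebra tH sA →ₗ[k] takeuchi k R H A tH sA :=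
  (mkq k R H A tH sA ∘ₗ (takeuchiSubalgebra tH sA).val.toLinearMap).codRestrict _
    fun m => Submodule.mem_map_of_mem m.2

theorem toTakeuchi_surjective : Function.Surjective (toTakeuchi tH sA) := by
  rintro ⟨x, m, hm, rfl⟩
  exact ⟨⟨m, hm⟩, rfl⟩

def takeuchiMul (x y : takeuchi k R H A tH sA) : takeuchi k R H A tH sA :=
  toTakeuchi tH sA
    (Function.surjInv (toTakeuchi_surjective tH sA) x *
      Function.surjInv (toTakeuchi_surjective tH sA) y)

theorem coe_takeuchiMul (x y : takeuchi k R H A tH sA) (m n : H ⊗[k] A)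
    (hm : (x : Q k R H A tH sA) = mkq k R H A tH sA m)
    (hn : (y : Q k R H A tH sA) = mkq k R H A tH sA n) :
    (takeuchiMul tH sA x y : Q k R H A tH sA) = mkq k R H A tH sA (m * n) := by
  have hsec := Function.surjInv_eq (toTakeuchi_surjective tH sA)
  set x₀ := Function.surjInv (toTakeuchi_surjective tH sA) x
  set y₀ := Function.surjInv (toTakeuchi_surjective tH sA) y
  have hx₀ : mkq k R H A tH sA m = mkq k R H A tH sA x₀ :=
    hm.symm.trans (congrArg _ (hsec x)).symm
  have hy₀ : mkq k R H A tH sA n = mkq k R H A tH sA y₀ :=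
    hn.symm.trans (congrArg _ (hsec y)).symm
  exact (mkq_mul_eq_of_mem_takeuchiPreimage tH sA x₀.2 hx₀ hy₀).symm

theorem takeuchiMul_toTakeuchi (a b : takeuchiSubalgebra tH sA) :
    takeuchiMul tH sA (toTakeuchi tH sA a) (toTakeuchi tH sA b) = toTakeuchi tH sA (a * b) :=
  Subtype.ext (coe_takeuchiMul tH sA _ _ a b rfl rfl)

end DKT
end

theorem stmt1_general (k : Type*) [CommRing k] (R H A : Type*) [Ring R] [Ring H] [Ring A]
    [Algebra k R] [Algebra k H] [Algebra k A]
    (tH : Rᵐᵒᵖ →ₐ[k] H) (sA : R →ₐ[k] A) :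
    ∃ (mul : DKT.takeuchi k R H A tH sA → DKT.takeuchi k R H A tH sA →
        DKT.takeuchi k R H A tH sA)
      (one : DKT.takeuchi k R H A tH sA),
      (∀ (x y : DKT.takeuchi k R H A tH sA) (m n : H ⊗[k] A),
        (x : DKT.Q k R H A tH sA) = DKT.mkq k R H A tH sA m →
        (y : DKT.Q k R H A tH sA) = DKT.mkq k R H A tH sA n →
        ((mul x y : DKT.takeuchi k R H A tH sA) : DKT.Q k R H A tH sA) =
          DKT.mkq k R H A tH sA (m * n)) ∧
      ((one : DKT.Q k R H A tH sA) = DKT.mkq k R H A tH sA ((1 : H) ⊗ₜ[k] (1 : A))) ∧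
      (∀ x y z, mul (mul x y) z = mul x (mul y z)) ∧
      (∀ x, mul one x = x) ∧ (∀ x, mul x one = x) ∧
      (∀ x y z, mul (x + y) z = mul x z + mul y z) ∧
      (∀ x y z, mul x (y + z) = mul x y + mul x z) ∧
      (∀ (c : k) x y, mul (c • x) y = c • mul x y) ∧
      (∀ (c : k) x y, mul x (c • y) = c • mul x y) := by
  have hπ := DKT.toTakeuchi_surjective tH sA
  have hmul := DKT.takeuchiMul_toTakeuchi tH sA
  refine ⟨DKT.takeuchiMul tH sA, DKT.toTakeuchi tH sA 1, DKT.coe_takeuchiMul tH sA, rfl,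
    hπ.forall₃.2 fun a b c => by simp only [hmul, mul_assoc],
    hπ.forall.2 fun a => by rw [hmul, one_mul],
    hπ.forall.2 fun a => by rw [hmul, mul_one],
    hπ.forall₃.2 fun a b c => by simp only [← map_add, hmul, add_mul],
    hπ.forall₃.2 fun a b c => by simp only [← map_add, hmul, mul_add],
    fun c => hπ.forall₂.2 fun a b => by simp only [← map_smul, hmul, smul_mul_assoc],
    fun c => hπ.forall₂.2 fun a b => by simp only [← map_smul, hmul, mul_smul_comm]⟩

/-- Let `(H, s_H, t_H)` be an `R^e`-ring (with commuting source and target)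
and `(A, s_A)` an `R`-ring. Then the Takeuchi product `H ×_R A ⊆ H ⊗_R A` carries a
well-defined factorwise multiplication `(Σ hⁱ ⊗ aⁱ)(Σ h̃ʲ ⊗ ãʲ) = Σ hⁱh̃ʲ ⊗ aⁱãʲ`
(independent of the chosen representatives in `H ⊗_k A`, whose factorwise product is the
tensor product algebra multiplication), contains `1_H ⊗_R 1_A`, and becomes an associative
unital `k`-algebra. -/
theorem stmt1 (k : Type*) [CommRing k] (R H A : Type*) [Ring R] [Ring H] [Ring A]
    [Algebra k R] [Algebra k H] [Algebra k A]
    (sH : R →ₐ[k] H) (tH : Rᵐᵒᵖ →ₐ[k] H) (sA : R →ₐ[k] A)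
    (hcomm : ∀ (r r' : R), sH r * tH (op r') = tH (op r') * sH r) :
    ∃ (mul : DKT.takeuchi k R H A tH sA → DKT.takeuchi k R H A tH sA →
        DKT.takeuchi k R H A tH sA)
      (one : DKT.takeuchi k R H A tH sA),
      (∀ (x y : DKT.takeuchi k R H A tH sA) (m n : H ⊗[k] A),
        (x : DKT.Q k R H A tH sA) = DKT.mkq k R H A tH sA m →
        (y : DKT.Q k R H A tH sA) = DKT.mkq k R H A tH sA n →
        ((mul x y : DKT.takeuchi k R H A tH sA) : DKT.Q k R H A tH sA) =
          DKT.mkq k R H A tH sA (m * n)) ∧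
      ((one : DKT.Q k R H A tH sA) = DKT.mkq k R H A tH sA ((1 : H) ⊗ₜ[k] (1 : A))) ∧
      (∀ x y z, mul (mul x y) z = mul x (mul y z)) ∧
      (∀ x, mul one x = x) ∧ (∀ x, mul x one = x) ∧
      (∀ x y z, mul (x + y) z = mul x z + mul y z) ∧
      (∀ x y z, mul x (y + z) = mul x y + mul x z) ∧
      (∀ (c : k) x y, mul (c • x) y = c • mul x y) ∧
      (∀ (c : k) x y, mul x (c • y) = c • mul x y) :=
  stmt1_general k R H A tH sA
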